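/- arXiv:2512.10000 — 7 statements merged into one kernel-verified Lean document; each statement's English description precedes it below -/
import Mathlib

section
/- The 4×4 boxworld matrix C with rows (1,0,0,1), (0,1,1,0), (1,0,1,0), (0,1,0,1) has rank 3 but nonnegative rank 4; in particular, C admits no factorization C = RP with R, P entrywise nonnegative and rank(R) = rank(P) = rank(C) = 3. -/
/-!
The diagonal of `C` is a fooling set: its entries are positive, and for `i ≠ j` one of `C i j`,
`C j i` vanishes, so in a nonnegative factorization `C = W H` the diagonal entries need pairwise
distinct inner indices. If `C = R P` with nonnegative factors of rank 3, then `R` has the column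
space and `P` the row space of `C`, so every column of `R` and every row of `P` is orthogonal to
`(1, 1, -1, -1)`, which spans both kernels of `C`. Taking `l` with `R 0 l, P l 0 > 0`, the zeros of
`C` force `R 1 l = R 3 l = P l 1 = P l 2 = 0`, orthogonality then forces `R 2 l, P l 3 > 0`, and so
`C 2 3 > 0`, which is false.
-/

open Matrix

section NonnegFactorization

variable {R m n κ : Type*} [Semiring R] [LinearOrder R] [IsStrictOrderedRing R] [Fintype κ]
  {W : Matrix m κ R} {H : Matrix κ n R}

theorem Matrix.mul_apply_pos_of_pos (hW : ∀ i l, 0 ≤ W i l) (hH : ∀ l j, 0 ≤ H l j)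
    {i : m} {j : n} {l : κ} (hWl : 0 < W i l) (hHl : 0 < H l j) : 0 < (W * H) i j :=
  (mul_pos hWl hHl).trans_le <|
    Finset.single_le_sum (f := fun l => W i l * H l j) (fun l _ => mul_nonneg (hW i l) (hH l j))
      (Finset.mem_univ l)

theorem Matrix.exists_pos_of_mul_apply_pos (hW : ∀ i l, 0 ≤ W i l)
    {i : m} {j : n} (h : 0 < (W * H) i j) : ∃ l, 0 < W i l ∧ 0 < H l j := by
  by_contra! hne
  refine h.not_ge (Finset.sum_nonpos fun l _ => ?_)
  rcases (hW i l).lt_or_eq with hWl | hWl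
  · exact mul_nonpos_of_nonneg_of_nonpos (hW i l) (hne l hWl)
  · simp [← hWl]

theorem Matrix.apply_eq_zero_of_mul_apply_eq_zero_left (hW : ∀ i l, 0 ≤ W i l)
    (hH : ∀ l j, 0 ≤ H l j) {i : m} {j : n} {l : κ} (h : (W * H) i j = 0) (hHl : 0 < H l j) :
    W i l = 0 :=
  (hW i l).eq_of_not_lt' fun hWl => (mul_apply_pos_of_pos hW hH hWl hHl).ne' h

theorem Matrix.apply_eq_zero_of_mul_apply_eq_zero_right (hW : ∀ i l, 0 ≤ W i l)
    (hH : ∀ l j, 0 ≤ H l j) {i : m} {j : n} {l : κ} (h : (W * H) i j = 0) (hWl : 0 < W i l) :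
    H l j = 0 :=
  (hH l j).eq_of_not_lt' fun hHl => (mul_apply_pos_of_pos hW hH hWl hHl).ne' h

theorem Matrix.card_le_of_fooling_set {ι : Type*} [Fintype ι] (hW : ∀ i l, 0 ≤ W i l)
    (hH : ∀ l j, 0 ≤ H l j) (row : ι → m) (col : ι → n)
    (hpos : ∀ a, 0 < (W * H) (row a) (col a))
    (hfool : ∀ a b, a ≠ b → (W * H) (row a) (col b) = 0 ∨ (W * H) (row b) (col a) = 0) :
    Fintype.card ι ≤ Fintype.card κ := by
  choose φ hφW hφH using fun a => exists_pos_of_mul_apply_pos hW (hpos a)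
  refine Fintype.card_le_of_injective φ fun a b hab => ?_
  by_contra hne
  rcases hfool a b hne with h | h
  · exact (mul_apply_pos_of_pos hW hH (hφW a) (hab ▸ hφH b)).ne' h
  · exact (mul_apply_pos_of_pos hW hH (hφW b) (hab ▸ hφH a)).ne' h

end NonnegFactorization

section RankFactorization

variable {K m n κ : Type*} [Field K] [Fintype m] [Fintype n] [Fintype κ]

theorem Matrix.vecMul_eq_zero_of_rank_le (A : Matrix m κ K) (B : Matrix κ n K)
    (hA : A.rank ≤ (A * B).rank) {y : m → K} (hy : y ᵥ* (A * B) = 0) : y ᵥ* A = 0 := by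
  classical
  have hrange : LinearMap.range (A * B).mulVecLin = LinearMap.range A.mulVecLin := by
    refine Submodule.eq_of_le_of_finrank_le ?_ hA
    rw [mulVecLin_mul]
    exact LinearMap.range_comp_le_range _ _
  ext l
  obtain ⟨v, hv⟩ : A *ᵥ Pi.single l 1 ∈ LinearMap.range (A * B).mulVecLin :=
    hrange ▸ ⟨_, rfl⟩
  calc (y ᵥ* A) l = y ⬝ᵥ (A *ᵥ Pi.single l 1) := by
        rw [dotProduct_mulVec, dotProduct_single, mul_one]
    _ = y ⬝ᵥ ((A * B) *ᵥ v) := by rw [← hv]; rfl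
    _ = 0 := by rw [dotProduct_mulVec, hy, zero_dotProduct]

theorem Matrix.mulVec_eq_zero_of_rank_le (A : Matrix m κ K) (B : Matrix κ n K)
    (hB : B.rank ≤ (A * B).rank) {x : n → K} (hx : (A * B) *ᵥ x = 0) : B *ᵥ x = 0 := by
  rw [← vecMul_transpose] at hx ⊢
  rw [transpose_mul] at hx
  refine vecMul_eq_zero_of_rank_le Bᵀ Aᵀ ?_ hx
  rwa [← transpose_mul, rank_transpose, rank_transpose]

end RankFactorization

def boxworld : Matrix (Fin 4) (Fin 4) ℝ := !![1,0,0,1; 0,1,1,0; 1,0,1,0; 0,1,0,1]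

theorem boxworld_nonneg (i j : Fin 4) : 0 ≤ boxworld i j := by
  fin_cases i <;> fin_cases j <;> simp [boxworld]

theorem boxworld_apply_self (i : Fin 4) : boxworld i i = 1 := by
  fin_cases i <;> rfl

theorem boxworld_apply_eq_zero_or (i j : Fin 4) (hij : i ≠ j) :
    boxworld i j = 0 ∨ boxworld j i = 0 := by
  fin_cases i <;> fin_cases j <;> simp_all [boxworld]

def boxworldKernel : Fin 4 → ℝ := ![1, 1, -1, -1]

theorem vecMul_boxworldKernel_apply {κ : Type*} (A : Matrix (Fin 4) κ ℝ) (l : κ) :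
    (boxworldKernel ᵥ* A) l = A 0 l + A 1 l - A 2 l - A 3 l := by
  simp only [vecMul, dotProduct, boxworldKernel, Fin.sum_univ_four, cons_val_zero, cons_val_one,
    cons_val, one_mul, neg_mul]
  ring

theorem mulVec_boxworldKernel_apply {κ : Type*} (A : Matrix κ (Fin 4) ℝ) (l : κ) :
    (A *ᵥ boxworldKernel) l = A l 0 + A l 1 - A l 2 - A l 3 := by
  simp only [mulVec, dotProduct, boxworldKernel, Fin.sum_univ_four, cons_val_zero, cons_val_one,
    cons_val, mul_one, mul_neg]
  ring

theorem boxworldKernel_vecMul_boxworld : boxworldKernel ᵥ* boxworld = 0 := by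
  ext j; fin_cases j <;> simp [boxworldKernel, boxworld, vecMul, dotProduct, Fin.sum_univ_four]

theorem boxworld_mulVec_boxworldKernel : boxworld *ᵥ boxworldKernel = 0 := by
  ext j; fin_cases j <;> simp [boxworldKernel, boxworld, mulVec, dotProduct, Fin.sum_univ_four]

theorem boxworld_rank : boxworld.rank = 3 := by
  let A : Matrix (Fin 4) (Fin 4) ℝ := !![1,0,0,0; 0,1,0,0; -1,0,1,0; -1,-1,1,1]
  let B : Matrix (Fin 4) (Fin 4) ℝ := !![1,0,0,-1; 0,1,-1,-1; 0,0,1,1; 0,0,0,1]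
  have hA : IsUnit A.det := by simp [A, det_succ_row_zero, Fin.sum_univ_succ]
  have hB : IsUnit B.det := by simp [B, det_succ_row_zero, Fin.sum_univ_succ]
  have hdiag : A * boxworld * B = diagonal ![1, 1, 1, 0] := by
    ext i j
    fin_cases i <;> fin_cases j <;> simp [A, B, boxworld, mul_apply, Fin.sum_univ_four]
  rw [← rank_mul_eq_right_of_isUnit_det A _ hA, ← rank_mul_eq_left_of_isUnit_det B _ hB, hdiag,
    rank_diagonal]
  simp [Fintype.card_subtype, Fin.univ_succ, Finset.filter_insert]

theorem boxworld_ne_mul_of_rank_le {k : ℕ} (R : Matrix (Fin 4) (Fin k) ℝ)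
    (P : Matrix (Fin k) (Fin 4) ℝ) (hR : ∀ i l, 0 ≤ R i l) (hP : ∀ l j, 0 ≤ P l j)
    (hRrank : R.rank ≤ 3) (hPrank : P.rank ≤ 3) : boxworld ≠ R * P := by
  intro h
  have entry (i j : Fin 4) : (R * P) i j = boxworld i j := by rw [h]
  have hcol (l : Fin k) : R 0 l + R 1 l - R 2 l - R 3 l = 0 := by
    rw [← vecMul_boxworldKernel_apply]
    exact congrFun (vecMul_eq_zero_of_rank_le R P (h ▸ boxworld_rank ▸ hRrank)
      (h ▸ boxworldKernel_vecMul_boxworld)) l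
  have hrow (l : Fin k) : P l 0 + P l 1 - P l 2 - P l 3 = 0 := by
    rw [← mulVec_boxworldKernel_apply]
    exact congrFun (mulVec_eq_zero_of_rank_le R P (h ▸ boxworld_rank ▸ hPrank)
      (h ▸ boxworld_mulVec_boxworldKernel)) l
  obtain ⟨l, hR0, hP0⟩ := exists_pos_of_mul_apply_pos hR ((entry 0 0).trans_gt one_pos)
  have hR1 : R 1 l = 0 := apply_eq_zero_of_mul_apply_eq_zero_left hR hP (entry 1 0) hP0
  have hR3 : R 3 l = 0 := apply_eq_zero_of_mul_apply_eq_zero_left hR hP (entry 3 0) hP0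
  have hP1 : P l 1 = 0 := apply_eq_zero_of_mul_apply_eq_zero_right hR hP (entry 0 1) hR0
  have hP2 : P l 2 = 0 := apply_eq_zero_of_mul_apply_eq_zero_right hR hP (entry 0 2) hR0
  have hR2 : 0 < R 2 l := by linarith [hcol l]
  have hP3 : 0 < P l 3 := by linarith [hrow l]
  exact (mul_apply_pos_of_pos hR hP hR2 hP3).ne' (entry 2 3)

/-- The boxworld COPE matrix has rank 3 and nonnegative rank 4; in particular
it admits no equirank nonnegative matrix factorization. -/
theorem boxworld_rank_separation
    (C : Matrix (Fin 4) (Fin 4) ℝ)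
    (hC : C = !![1,0,0,1; 0,1,1,0; 1,0,1,0; 0,1,0,1]) :
    C.rank = 3 ∧
    (∃ (W : Matrix (Fin 4) (Fin 4) ℝ) (H : Matrix (Fin 4) (Fin 4) ℝ),
      (∀ i j, 0 ≤ W i j) ∧ (∀ i j, 0 ≤ H i j) ∧ C = W * H) ∧
    (∀ (k : ℕ) (W : Matrix (Fin 4) (Fin k) ℝ) (H : Matrix (Fin k) (Fin 4) ℝ),
      (∀ i j, 0 ≤ W i j) → (∀ i j, 0 ≤ H i j) → C = W * H → 4 ≤ k) ∧
    ¬ ∃ (k : ℕ) (R : Matrix (Fin 4) (Fin k) ℝ) (P : Matrix (Fin k) (Fin 4) ℝ),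
      (∀ i j, 0 ≤ R i j) ∧ (∀ i j, 0 ≤ P i j) ∧ C = R * P ∧
      R.rank = 3 ∧ P.rank = 3 := by
  obtain rfl : C = boxworld := hC
  refine ⟨boxworld_rank, ⟨boxworld, 1, boxworld_nonneg, fun i j => ?_, (mul_one _).symm⟩, ?_, ?_⟩
  · rw [one_apply]; split_ifs <;> norm_num
  · intro k W H hW hH hWH
    have hdiag (i : Fin 4) : 0 < (W * H) i i := by rw [← hWH, boxworld_apply_self]; exact one_pos
    have hfool (i j : Fin 4) (hij : i ≠ j) : (W * H) i j = 0 ∨ (W * H) j i = 0 := by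
      rw [← hWH]; exact boxworld_apply_eq_zero_or i j hij
    simpa using card_le_of_fooling_set hW hH id id hdiag hfool
  · rintro ⟨k, R, P, hR, hP, hRP, hRrank, hPrank⟩
    exact boxworld_ne_mul_of_rank_le R P hR hP hRrank.le hPrank.le hRP
end

section
/- The 6×6 Spekkens toy theory matrix C_S (with C_S[i][i'] = 1 if i,i' form a matching pair, 0 if opposite pair, 1/2 otherwise, as given explicitly) has rank 4 and admits an exact nonnegative factorization C_S = R·P with R a 6×4 zero-one matrix and P a 4×6 column-stochastic matrix with entries in {0, 1/2}, both of rank 4. -/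
/-!
The matrix `P` is `½ Rᵀ`, so `C_S = R P = ½ R Rᵀ` is a Gram matrix over `ℝ` and
`rank C_S = rank R = rank P`. The matrix `R` has a left inverse (each unit vector is half a
signed sum of three rows of `R`), hence rank `4`. The conditions on the entries of `P` are
those of `R` halved: `R` is a zero-one matrix with exactly two ones in each row.
-/

open Matrix

namespace Matrix

theorem rank_eq_card_of_mul_eq_one {m n R : Type*} [Fintype m] [Fintype n] [DecidableEq n]
    [CommSemiring R] [StrongRankCondition R] {A : Matrix m n R} {B : Matrix n m R}
    (h : B * A = 1) : A.rank = Fintype.card n :=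
  le_antisymm A.rank_le_card_width (by simpa [h, rank_one] using rank_mul_le_right B A)

theorem rank_smul_of_ne_zero {m n K : Type*} [Fintype n] [Field K] {c : K} (hc : c ≠ 0)
    (A : Matrix m n K) : (c • A).rank = A.rank :=
  rank_smul_of_mem_nonZeroDivisors A (mem_nonZeroDivisors_of_ne_zero hc)

end Matrix

namespace Spekkens

noncomputable def C : Matrix (Fin 6) (Fin 6) ℝ :=
  !![1,0,1/2,1/2,1/2,1/2;
     0,1,1/2,1/2,1/2,1/2;
     1/2,1/2,1,0,1/2,1/2;
     1/2,1/2,0,1,1/2,1/2;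
     1/2,1/2,1/2,1/2,1,0;
     1/2,1/2,1/2,1/2,0,1]

noncomputable def R : Matrix (Fin 6) (Fin 4) ℝ :=
  !![1,0,0,1; 0,1,1,0; 0,0,1,1; 1,1,0,0; 1,0,1,0; 0,1,0,1]

noncomputable def P : Matrix (Fin 4) (Fin 6) ℝ :=
  !![1/2,0,0,1/2,1/2,0;
     0,1/2,0,1/2,0,1/2;
     0,1/2,1/2,0,1/2,0;
     1/2,0,1/2,0,0,1/2]

noncomputable def leftInvR : Matrix (Fin 4) (Fin 6) ℝ :=
  !![1/2,0,0,1/2,0,-1/2;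
     0,1/2,0,1/2,-1/2,0;
     -1/2,0,1/2,0,1/2,0;
     1/2,0,1/2,0,-1/2,0]

theorem P_eq_smul_transpose : P = (2 : ℝ)⁻¹ • Rᵀ := by
  ext i j
  fin_cases i <;> fin_cases j <;> norm_num [P, R]

theorem C_eq_mul : C = R * P := by
  ext i j
  fin_cases i <;> fin_cases j <;> norm_num [C, R, P, mul_apply, Fin.sum_univ_succ]

theorem leftInvR_mul : leftInvR * R = 1 := by
  ext i j
  fin_cases i <;> fin_cases j <;> norm_num [leftInvR, R, mul_apply, Fin.sum_univ_succ]

theorem R_eq_zero_or_eq_one (i : Fin 6) (j : Fin 4) : R i j = 0 ∨ R i j = 1 := by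
  fin_cases i <;> fin_cases j <;> simp [R]

theorem sum_R_row (i : Fin 6) : ∑ j, R i j = 2 := by
  fin_cases i <;> norm_num [R, Fin.sum_univ_succ]

theorem rank_R : R.rank = 4 := by
  simpa using rank_eq_card_of_mul_eq_one leftInvR_mul

theorem rank_P : P.rank = 4 := by
  rw [P_eq_smul_transpose, rank_smul_of_ne_zero (by norm_num), rank_transpose, rank_R]

theorem rank_C : C.rank = 4 := by
  rw [C_eq_mul, P_eq_smul_transpose, Matrix.mul_smul, rank_smul_of_ne_zero (by norm_num),
    rank_self_mul_transpose, rank_R]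

theorem P_apply (i : Fin 4) (j : Fin 6) : P i j = R j i / 2 := by
  simp [P_eq_smul_transpose, div_eq_inv_mul]

theorem P_eq_zero_or_eq_half (i : Fin 4) (j : Fin 6) : P i j = 0 ∨ P i j = 1 / 2 := by
  rcases R_eq_zero_or_eq_one j i with h | h <;> simp [P_apply, h]

theorem P_nonneg (i : Fin 4) (j : Fin 6) : 0 ≤ P i j := by
  rcases P_eq_zero_or_eq_half i j with h | h <;> norm_num [h]

theorem sum_P_col (j : Fin 6) : ∑ i, P i j = 1 := by
  simp only [P_apply, ← Finset.sum_div, sum_R_row]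
  norm_num

end Spekkens

/-- Spekkens' toy theory matrix has rank 4 and admits an exact equirank
nonnegative factorization `C_S = R * P` with `R` a 6×4 zero-one matrix and
`P` a 4×6 column-stochastic matrix with entries in `{0, 1/2}`, both of rank 4. -/
theorem spekkens_noncontextual_model
    (C : Matrix (Fin 6) (Fin 6) ℝ)
    (hC : C = !![1,0,1/2,1/2,1/2,1/2;
                 0,1,1/2,1/2,1/2,1/2;
                 1/2,1/2,1,0,1/2,1/2;
                 1/2,1/2,0,1,1/2,1/2;
                 1/2,1/2,1/2,1/2,1,0;
                 1/2,1/2,1/2,1/2,0,1])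
    (R : Matrix (Fin 6) (Fin 4) ℝ)
    (hR : R = !![1,0,0,1; 0,1,1,0; 0,0,1,1; 1,1,0,0; 1,0,1,0; 0,1,0,1])
    (P : Matrix (Fin 4) (Fin 6) ℝ)
    (hP : P = !![1/2,0,0,1/2,1/2,0;
                 0,1/2,0,1/2,0,1/2;
                 0,1/2,1/2,0,1/2,0;
                 1/2,0,1/2,0,0,1/2]) :
    C.rank = 4 ∧ C = R * P ∧
    (∀ i j, R i j = 0 ∨ R i j = 1) ∧
    (∀ i j, P i j = 0 ∨ P i j = 1/2) ∧
    (∀ i j, 0 ≤ P i j) ∧ (∀ j, ∑ i, P i j = 1) ∧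
    R.rank = 4 ∧ P.rank = 4 := by
  subst hC hR hP
  exact ⟨Spekkens.rank_C, Spekkens.C_eq_mul, Spekkens.R_eq_zero_or_eq_one,
    Spekkens.P_eq_zero_or_eq_half, Spekkens.P_nonneg, Spekkens.sum_P_col, Spekkens.rank_R,
    Spekkens.rank_P⟩
end

section
/- For the Spekkens toy theory matrix C_S (6×6, rank 4), the nonnegative rank of C_S is exactly 4. -/
set_option maxHeartbeats 1600000

/-- The nonnegative rank of the Spekkens toy theory matrix is exactly 4:
an NMF of inner dimension 4 exists, and every NMF has inner dimension ≥ 4. -/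
theorem spekkens_nonnegative_rank_four
    (C : Matrix (Fin 6) (Fin 6) ℝ)
    (hC : C = !![1,0,1/2,1/2,1/2,1/2;
                 0,1,1/2,1/2,1/2,1/2;
                 1/2,1/2,1,0,1/2,1/2;
                 1/2,1/2,0,1,1/2,1/2;
                 1/2,1/2,1/2,1/2,1,0;
                 1/2,1/2,1/2,1/2,0,1]) :
    (∃ (W : Matrix (Fin 6) (Fin 4) ℝ) (H : Matrix (Fin 4) (Fin 6) ℝ),
      (∀ i j, 0 ≤ W i j) ∧ (∀ i j, 0 ≤ H i j) ∧ C = W * H) ∧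
    (∀ (k : ℕ) (W : Matrix (Fin 6) (Fin k) ℝ) (H : Matrix (Fin k) (Fin 6) ℝ),
      (∀ i j, 0 ≤ W i j) → (∀ i j, 0 ≤ H i j) → C = W * H → 4 ≤ k) := by
  subst hC
  constructor
  · refine ⟨!![1,1,0,0; 0,0,1,1; 1,0,1,0; 0,1,0,1; 1,0,0,1; 0,1,1,0],
      !![1/2,0,1/2,0,1/2,0; 1/2,0,0,1/2,0,1/2; 0,1/2,1/2,0,0,1/2; 0,1/2,0,1/2,1/2,0],
      ?_, ?_, ?_⟩
    · intro i j; fin_cases i <;> fin_cases j <;> norm_num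
    · intro i j; fin_cases i <;> fin_cases j <;> norm_num
    · ext i j
      fin_cases i <;> fin_cases j <;>
        norm_num [Matrix.mul_apply, Fin.sum_univ_succ]
  · intro k W H _ _ hWH
    set A : Matrix (Fin 4) (Fin 6) ℝ :=
      !![2,1,-1,0,-1,0; 1,2,-1,0,-1,0; -1,-1,2,0,0,0; -1,-1,0,0,2,0] with hA
    set B : Matrix (Fin 6) (Fin 4) ℝ :=
      !![1,0,0,0; 0,1,0,0; 0,0,1,0; 0,0,0,0; 0,0,0,1; 0,0,0,0] with hB
    have hAC : A * !![(1:ℝ),0,1/2,1/2,1/2,1/2;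
                 0,1,1/2,1/2,1/2,1/2;
                 1/2,1/2,1,0,1/2,1/2;
                 1/2,1/2,0,1,1/2,1/2;
                 1/2,1/2,1/2,1/2,1,0;
                 1/2,1/2,1/2,1/2,0,1] =
        !![1,0,0,1,0,1; 0,1,0,1,0,1; 0,0,1,-1,0,0; 0,0,0,0,1,-1] := by
      ext i j
      fin_cases i <;> fin_cases j <;>
        norm_num [Matrix.mul_apply, Fin.sum_univ_succ, hA]
    have hACB : (!![(1:ℝ),0,0,1,0,1; 0,1,0,1,0,1; 0,0,1,-1,0,0; 0,0,0,0,1,-1]) * B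
        = 1 := by
      ext i j
      fin_cases i <;> fin_cases j <;>
        norm_num [Matrix.mul_apply, Fin.sum_univ_succ, hB, Matrix.one_apply, Fin.ext_iff]
    have hid : (A * W) * (H * B) = 1 := by
      have h : A * (W * H) * B = 1 := by rw [← hWH, hAC, hACB]
      rw [← h, Matrix.mul_assoc, Matrix.mul_assoc, Matrix.mul_assoc]
    have h4 : (4 : ℕ) = ((A * W) * (H * B)).rank := by
      rw [hid, Matrix.rank_one]; simp
    have h1 : ((A * W) * (H * B)).rank ≤ (A * W).rank :=
      Matrix.rank_mul_le_left _ _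
    have h2 : (A * W).rank ≤ k := by
      simpa using Matrix.rank_le_card_width (A * W)
    omega
end

section
/- Let C = RP be a nonnegative factorization of a nonnegative matrix C with inner dimension k. If C contains an m×m submatrix C_m such that each column of C_m has a zero entry in a row position where all other columns of C_m are strictly positive, then the supports of the corresponding k-dimensional columns of P form an antichain of size m, and hence m ≤ binomial(k, ⌊k/2⌋). -/
/-!
A product of nonnegative matrices has a zero entry `(i, j)` exactly when row `i` of `R` and
column `j` of `P` have disjoint supports. Hence if the support of column `c i` of `P` were
contained in that of column `c j`, the zero at `(r j, c j)` would force a zero at `(r j, c i)`,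
which the diagonal zero pattern forbids. So the `m` column supports form an antichain of subsets
of a `k`-element set, and Sperner's theorem bounds `m`.
-/

open Finset

section

variable {l m n α : Type*} [Fintype m] [Semiring α] [PartialOrder α] [IsOrderedRing α]
  [NoZeroDivisors α] {A : Matrix l m α} {B : Matrix m n α}

theorem Matrix.mul_apply_eq_zero_iff_of_nonneg (hA : ∀ i t, 0 ≤ A i t) (hB : ∀ t j, 0 ≤ B t j)
    (i : l) (j : n) : (A * B) i j = 0 ↔ ∀ t, A i t = 0 ∨ B t j = 0 := by
  rw [Matrix.mul_apply, sum_eq_zero_iff_of_nonneg fun t _ => mul_nonneg (hA i t) (hB t j)]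
  simp only [mem_univ, true_implies, mul_eq_zero]

theorem Matrix.mul_apply_eq_zero_of_support_subset (hA : ∀ i t, 0 ≤ A i t)
    (hB : ∀ t j, 0 ≤ B t j) {i : l} {j j' : n} (hzero : (A * B) i j = 0)
    (hsub : {t | B t j' ≠ 0} ⊆ {t | B t j ≠ 0}) : (A * B) i j' = 0 := by
  rw [Matrix.mul_apply_eq_zero_iff_of_nonneg hA hB] at hzero ⊢
  intro t
  by_cases hBt : B t j' = 0
  · exact .inr hBt
  · exact .inl ((hzero t).resolve_right (hsub hBt))

theorem Matrix.not_support_subset_of_mul_apply_eq_zero_iff {ι : Type*}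
    (hA : ∀ i t, 0 ≤ A i t) (hB : ∀ t j, 0 ≤ B t j) {r : ι → l} {c : ι → n}
    (hpattern : ∀ i j, (A * B) (r i) (c j) = 0 ↔ i = j) {i j : ι} (hij : i ≠ j) :
    ¬ {t | B t (c i) ≠ 0} ⊆ {t | B t (c j) ≠ 0} := fun hsub =>
  hij ((hpattern j i).mp
    (Matrix.mul_apply_eq_zero_of_support_subset hA hB ((hpattern j j).mpr rfl) hsub)).symm

end

theorem Finset.card_le_choose_of_not_subset {ι α : Type*} [Fintype ι] [Fintype α]
    {S : ι → Finset α} (hS : ∀ i j, i ≠ j → ¬ S i ⊆ S j) :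
    Fintype.card ι ≤ (Fintype.card α).choose (Fintype.card α / 2) := by
  classical
  have hinj : Function.Injective S := fun i j hij =>
    by_contra fun hne => hS i j hne hij.le
  have hanti : IsAntichain (· ⊆ ·) (SetLike.coe (univ.image S)) := by
    simp only [coe_image, coe_univ, Set.image_univ]
    rintro _ ⟨i, rfl⟩ _ ⟨j, rfl⟩ hne
    exact hS i j fun hij => hne (congrArg S hij)
  simpa [card_image_of_injective _ hinj] using hanti.sperner

theorem sparsity_lower_bound_general
    {M N k m : ℕ}
    (C : Matrix (Fin M) (Fin N) ℝ)
    (R : Matrix (Fin M) (Fin k) ℝ) (P : Matrix (Fin k) (Fin N) ℝ)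
    (hR : ∀ i j, 0 ≤ R i j) (hP : ∀ i j, 0 ≤ P i j)
    (hfac : C = R * P)
    (r : Fin m → Fin M) (c : Fin m → Fin N)
    (hpattern : ∀ i j, C (r i) (c j) = 0 ↔ i = j) :
    (∀ i j, i ≠ j →
      ¬ ({t | P t (c i) ≠ 0} ⊆ {t | P t (c j) ≠ 0})) ∧
    m ≤ Nat.choose k (k / 2) := by
  subst hfac
  have hanti : ∀ i j, i ≠ j → ¬ ({t | P t (c i) ≠ 0} ⊆ {t | P t (c j) ≠ 0}) :=
    fun _ _ => Matrix.not_support_subset_of_mul_apply_eq_zero_iff hR hP hpattern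
  refine ⟨hanti, ?_⟩
  classical
  simpa using Finset.card_le_choose_of_not_subset
    (S := fun i => {t | P t (c i) ≠ 0}.toFinset) fun i j hij hsub =>
      hanti i j hij (Set.toFinset_subset_toFinset.mp hsub)

/-- If `C = R * P` is a nonnegative factorization and `C` contains an `m × m`
submatrix whose zero pattern is exactly the diagonal (entry `(r i, c j)` of `C`
vanishes iff `i = j`), then the supports of the corresponding columns of `P`
form an antichain of size `m`, whence `m ≤ C(k, ⌊k/2⌋)`. -/
theorem sparsity_lower_bound
    {M N k m : ℕ}
    (C : Matrix (Fin M) (Fin N) ℝ)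
    (R : Matrix (Fin M) (Fin k) ℝ) (P : Matrix (Fin k) (Fin N) ℝ)
    (hC : ∀ i j, 0 ≤ C i j)
    (hR : ∀ i j, 0 ≤ R i j) (hP : ∀ i j, 0 ≤ P i j)
    (hfac : C = R * P)
    (r : Fin m → Fin M) (c : Fin m → Fin N)
    (hpattern : ∀ i j, C (r i) (c j) = 0 ↔ i = j) :
    (∀ i j, i ≠ j →
      ¬ ({t | P t (c i) ≠ 0} ⊆ {t | P t (c j) ≠ 0})) ∧
    m ≤ Nat.choose k (k / 2) :=
  sparsity_lower_bound_general C R P hR hP hfac r c hpattern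
end

section
/- Let C = MS be a rank factorization of C (rank(M)=rank(S)=rank(C)=r) and suppose the columns of a selected r×r submatrix S_TOM of S are linearly independent (hence S_TOM is invertible). If for each measurement block M_j of M the row sums satisfy 1ᵀM_j S = 1ᵀ (the column sums of each block of C equal 1), then for every column s of S, 1ᵀ S_TOM^{-1} s = 1, i.e., the transformed states S' = S_TOM^{-1}S all have entries summing to 1. -/
open Matrix

/-- Normalization of GPT states by an invertible tomographic submatrix: if
`C = M * S` is a rank factorization, `S_TOM = S.submatrix id g` is a selection
of `r` linearly independent columns of `S`, and the column sums of every
measurement block `(Mblk j) * S` equal 1, then every column of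
`S_TOM⁻¹ * S` has entries summing to 1. -/
theorem tomographic_normalization
    {m n r p : ℕ} {ι : Type*} [Nonempty ι]
    (C : Matrix (Fin m) (Fin n) ℝ)
    (M : Matrix (Fin m) (Fin r) ℝ) (S : Matrix (Fin r) (Fin n) ℝ)
    (hfac : C = M * S)
    (hM : M.rank = r) (hS : S.rank = r) (hCr : C.rank = r)
    (g : Fin r → Fin n)
    (hTOM : LinearIndependent ℝ (fun j : Fin r => (fun i => S i (g j))))
    (Mblk : ι → Matrix (Fin p) (Fin r) ℝ)
    (hblk : ∀ (j : ι) (c : Fin n), ∑ i, ((Mblk j) * S) i c = 1) :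
    ∀ c : Fin n, ∑ i, ((S.submatrix id g)⁻¹ * S) i c = 1 := by
  set A := S.submatrix id g with hA
  have hunit : IsUnit A := by
    rw [← Matrix.linearIndependent_cols_iff_isUnit]
    exact hTOM
  have hinv : A * A⁻¹ = 1 :=
    Matrix.mul_nonsing_inv A ((Matrix.isUnit_iff_isUnit_det A).mp hunit)
  obtain ⟨j₀⟩ := ‹Nonempty ι›
  set v : Fin r → ℝ := fun k => ∑ i, Mblk j₀ i k with hv
  have hvS : ∀ c : Fin n, ∑ k, v k * S k c = 1 := by
    intro c
    have := hblk j₀ c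
    simp only [Matrix.mul_apply] at this
    rw [Finset.sum_comm] at this
    simpa [hv, Finset.sum_mul] using this
  have hone : ∀ c : Fin n, (v ᵥ* S) c = 1 := fun c => hvS c
  have hvA : v ᵥ* A = fun _ => (1 : ℝ) := by
    funext j
    simp only [Matrix.vecMul, dotProduct, hA, Matrix.submatrix_apply, id]
    exact hvS (g j)
  have hkey : (fun _ : Fin r => (1 : ℝ)) ᵥ* A⁻¹ = v := by
    rw [← hvA, Matrix.vecMul_vecMul, hinv, Matrix.vecMul_one]
  intro c
  have : ((fun _ : Fin r => (1 : ℝ)) ᵥ* (A⁻¹ * S)) c = 1 := by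
    rw [← Matrix.vecMul_vecMul, hkey]
    exact hvS c
  simpa [Matrix.vecMul, dotProduct] using this
end

section
/- For the boxworld matrix C (4×4, rank 3), any polytope spanned by columns of a 4×k column-stochastic matrix R whose column space equals the column space of C and whose convex hull contains all columns of C must contain each column of C as a vertex; consequently, the only nonnegative factorization C = RP with rank(R) = 3 and R column stochastic (up to permutation and scaling of columns) has R's columns equal to the columns of (1/2)·C, forcing rank(P) = 4 > 3. -/
/-!
The column space of `C` is the hyperplane `x₀ + x₁ = x₂ + x₃`, so its probability vectors are
those with `x₀ + x₁ = x₂ + x₃ = 1/2`: a square whose vertices are the columns of `C / 2`, each the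
only such vector with its zero pattern. When a vertex is a convex combination of these vectors,
every vector of positive weight inherits its zeros and so equals the vertex. If `C = R P` with
`rank R = 3`, then `R` and `C` have the same column space, so column `j` of `P` is supported
on columns of `R` equal to the `j`-th vertex; choosing one such row for each `j` exhibits a
nonsingular diagonal `4 × 4` submatrix of `P`.
-/

open Matrix

theorem apply_eq_zero_of_sum_smul_eq {ι κ : Type*} [Fintype ι] {w : ι → ℝ} {z : ι → κ → ℝ}
    {x : κ → ℝ} (hw : 0 ≤ w) (hz : ∀ i, 0 ≤ z i) (hx : ∑ i, w i • z i = x) {i : ι}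
    (hwi : 0 < w i) {m : κ} (hxm : x m = 0) : z i m = 0 := by
  have hle : w i • z i ≤ x :=
    hx ▸ Finset.single_le_sum (fun j _ => smul_nonneg (hw j) (hz j)) (Finset.mem_univ i)
  exact le_antisymm (nonpos_of_mul_nonpos_right (hxm ▸ hle m) hwi) (hz i m)

theorem Matrix.sum_mul_apply_of_sum_eq_one {m n o R : Type*} [Fintype m] [Fintype n]
    [CommSemiring R] {A : Matrix m n R} (hA : ∀ t, ∑ i, A i t = 1) (B : Matrix n o R) (j : o) :
    ∑ i, (A * B) i j = ∑ t, B t j := by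
  simp only [mul_apply]
  rw [Finset.sum_comm]
  simp only [← Finset.sum_mul, hA, one_mul]

theorem Matrix.rank_eq_card_of_pivots {m n K : Type*} [Fintype n] [DecidableEq n] [Field K]
    (P : Matrix m n K) (t : n → m) (hpivot : ∀ j, P (t j) j ≠ 0)
    (hoff : ∀ j j', j ≠ j' → P (t j) j' = 0) : P.rank = Fintype.card n := by
  classical
  have hdiag : P.submatrix t id = diagonal fun j => P (t j) j := by
    ext j j'
    by_cases h : j = j'
    · subst h; simp
    · simp [diagonal_apply_ne _ h, hoff j j' h]
  refine le_antisymm P.rank_le_card_width ?_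
  calc Fintype.card n = Fintype.card {j // P (t j) j ≠ 0} :=
        (Fintype.card_congr (Equiv.subtypeUnivEquiv hpivot)).symm
    _ = (P.submatrix t id).rank := by rw [hdiag, rank_diagonal]
    _ ≤ P.rank := P.rank_submatrix_le t id

namespace Boxworld

def mat : Matrix (Fin 4) (Fin 4) ℝ := !![1,0,0,1; 0,1,1,0; 1,0,1,0; 0,1,0,1]

def marginalGap : (Fin 4 → ℝ) →ₗ[ℝ] ℝ where
  toFun x := x 0 + x 1 - x 2 - x 3
  map_add' x y := by simp only [Pi.add_apply]; ring
  map_smul' c x := by simp only [Pi.smul_apply, smul_eq_mul, RingHom.id_apply]; ring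

theorem marginalGap_apply (x : Fin 4 → ℝ) : marginalGap x = x 0 + x 1 - x 2 - x 3 := rfl

theorem range_mulVecLin_mat : LinearMap.range mat.mulVecLin = LinearMap.ker marginalGap := by
  apply le_antisymm
  · rintro x ⟨v, rfl⟩
    simp only [mat, mulVecBilin_apply, cons_mulVec, dotProduct, Fin.sum_univ_four,
      cons_val_zero, cons_val_one, cons_val, empty_mulVec, LinearMap.mem_ker, marginalGap_apply]
    ring
  · intro x hx
    rw [LinearMap.mem_ker, marginalGap_apply] at hx
    refine ⟨![x 0, x 3, x 1 - x 3, 0], funext fun i => ?_⟩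
    fin_cases i <;> simp [mat, mulVec, dotProduct, Fin.sum_univ_four]
    linarith

theorem rank_mat : mat.rank = 3 := by
  have hsurj : Function.Surjective marginalGap := fun c =>
    ⟨Pi.single 0 c, by simp [marginalGap_apply]⟩
  have h := marginalGap.finrank_range_add_finrank_ker
  rw [LinearMap.range_eq_top.mpr hsurj, finrank_top, Module.finrank_fin_fun,
    Module.finrank_self] at h
  rw [Matrix.rank, range_mulVecLin_mat]
  omega

noncomputable def halfCol (j : Fin 4) : Fin 4 → ℝ := fun m => mat m j / 2

theorem halfCol_injective : Function.Injective halfCol := by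
  intro j j' h
  have h0 := congrFun h 0
  have h2 := congrFun h 2
  fin_cases j <;> fin_cases j' <;> simp_all [halfCol, mat]

theorem eq_halfCol_of_vanishing {z : Fin 4 → ℝ} (hz1 : ∑ i, z i = 1)
    (hz : z ∈ LinearMap.range mat.mulVecLin) {j : Fin 4} (hvan : ∀ m, mat m j = 0 → z m = 0) :
    z = halfCol j := by
  rw [range_mulVecLin_mat, LinearMap.mem_ker, marginalGap_apply] at hz
  rw [Fin.sum_univ_four] at hz1
  fin_cases j <;> simp [Fin.forall_fin_succ, mat] at hvan <;>
    funext m <;> fin_cases m <;> simp [halfCol, mat] <;> linarith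

def IsState (z : Fin 4 → ℝ) : Prop :=
  0 ≤ z ∧ ∑ m, z m = 1 ∧ z ∈ LinearMap.range mat.mulVecLin

theorem eq_halfCol_of_pos_weight {ι : Type*} [Fintype ι] {w : ι → ℝ} {z : ι → Fin 4 → ℝ}
    (hw : 0 ≤ w) (hz : ∀ i, IsState (z i)) {j : Fin 4}
    (hsum : ∑ i, w i • z i = halfCol j) {i : ι} (hi : 0 < w i) :
    z i = halfCol j :=
  eq_halfCol_of_vanishing (hz i).2.1 (hz i).2.2 fun m hm =>
    apply_eq_zero_of_sum_smul_eq hw (fun i => (hz i).1) hsum hi (by simp [halfCol, hm])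

variable {k : ℕ} {R : Matrix (Fin 4) (Fin k) ℝ}

theorem isState_col (hR0 : ∀ i t, 0 ≤ R i t) (hR1 : ∀ t, ∑ i, R i t = 1)
    (hR : LinearMap.range R.mulVecLin ≤ LinearMap.range mat.mulVecLin) (t : Fin k) :
    IsState (R.col t) :=
  ⟨fun m => hR0 m t, hR1 t, hR ⟨Pi.single t 1, mulVec_single_one R t⟩⟩

theorem exists_col_eq_halfCol_of_mem_convexHull (hR0 : ∀ i t, 0 ≤ R i t)
    (hR1 : ∀ t, ∑ i, R i t = 1)
    (hR : LinearMap.range R.mulVecLin ≤ LinearMap.range mat.mulVecLin) {j : Fin 4}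
    (hj : halfCol j ∈ convexHull ℝ (Set.range R.col)) :
    ∃ t, R.col t = halfCol j := by
  obtain ⟨ι, _, w, z, hw0, hw1, hz, hsum⟩ := mem_convexHull_iff_exists_fintype.mp hj
  have hzState : ∀ i, IsState (z i) := fun i => by
    obtain ⟨t, ht⟩ := hz i
    exact ht ▸ isState_col hR0 hR1 hR t
  obtain ⟨i, -, hwi⟩ := Finset.exists_lt_of_sum_lt (s := Finset.univ) (f := 0) (g := w)
    (by simp [hw1])
  obtain ⟨t, ht⟩ := hz i
  exact ⟨t, ht.trans (eq_halfCol_of_pos_weight hw0 hzState hsum hwi)⟩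

variable {P : Matrix (Fin k) (Fin 4) ℝ}

theorem col_eq_halfCol_of_mul_eq (hR0 : ∀ i t, 0 ≤ R i t) (hR1 : ∀ t, ∑ i, R i t = 1)
    (hR : LinearMap.range R.mulVecLin ≤ LinearMap.range mat.mulVecLin) (hP : ∀ t j, 0 ≤ P t j)
    (hRP : mat = R * P) {t : Fin k} {j : Fin 4} (ht : 0 < P t j) :
    R.col t = halfCol j := by
  refine eq_halfCol_of_pos_weight (w := fun t => P t j / 2)
    (fun t => div_nonneg (hP t j) zero_le_two) (isState_col hR0 hR1 hR) ?_ (half_pos ht)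
  ext m
  simp [halfCol, hRP, mul_apply, Finset.sum_apply, Finset.sum_div, mul_div_assoc, mul_comm]

theorem exists_pos_of_mul_eq (hR1 : ∀ t, ∑ i, R i t = 1) (hRP : mat = R * P) (j : Fin 4) :
    ∃ t, 0 < P t j := by
  have hsum : ∑ t, P t j = 2 := by
    rw [← sum_mul_apply_of_sum_eq_one hR1, ← hRP]
    fin_cases j <;> simp [mat, Fin.sum_univ_four] <;> norm_num
  obtain ⟨t, -, ht⟩ := Finset.exists_lt_of_sum_lt (s := Finset.univ) (f := 0)
    (g := fun t => P t j) (by simp [hsum])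
  exact ⟨t, ht⟩

end Boxworld

open Boxworld

/-- Geometric rank separation for boxworld. Part 1: any column-stochastic
matrix `R` whose column space equals that of `C` and whose columns' convex
hull contains every (normalized) column of `C` must contain each normalized
column of `C` among its columns (as a vertex). Part 2: consequently, in any
nonnegative factorization `C = R * P` with `R` column stochastic and
`rank R = 3`, the columns of `(1/2) • C` all occur among the columns of `R`,
and `rank P = 4 > 3`. -/
theorem boxworld_geometric_rank_separation
    (C : Matrix (Fin 4) (Fin 4) ℝ)
    (hC : C = !![1,0,0,1; 0,1,1,0; 1,0,1,0; 0,1,0,1]) :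
    (∀ (k : ℕ) (R : Matrix (Fin 4) (Fin k) ℝ),
      (∀ i j, 0 ≤ R i j) → (∀ j, ∑ i, R i j = 1) →
      LinearMap.range R.mulVecLin = LinearMap.range C.mulVecLin →
      (∀ j : Fin 4, (fun i => C i j / 2) ∈
        convexHull ℝ (Set.range (fun t => fun i => R i t))) →
      ∀ j : Fin 4, ∃ t : Fin k, (fun i => R i t) = fun i => C i j / 2) ∧
    (∀ (k : ℕ) (R : Matrix (Fin 4) (Fin k) ℝ) (P : Matrix (Fin k) (Fin 4) ℝ),
      (∀ i j, 0 ≤ R i j) → (∀ j, ∑ i, R i j = 1) →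
      (∀ i j, 0 ≤ P i j) → C = R * P → R.rank = 3 →
      (∀ j : Fin 4, ∃ t : Fin k, (fun i => R i t) = fun i => C i j / 2) ∧
        P.rank = 4 ∧ 3 < P.rank) := by
  obtain rfl : C = mat := hC
  refine ⟨fun k R hR0 hR1 hR hhull j =>
    exists_col_eq_halfCol_of_mem_convexHull hR0 hR1 hR.le (hhull j), ?_⟩
  intro k R P hR0 hR1 hP0 hRP hrank
  have hR : LinearMap.range R.mulVecLin ≤ LinearMap.range mat.mulVecLin := by
    have hle : LinearMap.range mat.mulVecLin ≤ LinearMap.range R.mulVecLin := by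
      rw [hRP, mulVecLin_mul]
      exact LinearMap.range_comp_le_range _ _
    exact (Submodule.eq_of_le_of_finrank_eq hle (rank_mat.trans hrank.symm)).ge
  choose t ht using exists_pos_of_mul_eq hR1 hRP
  have hcol : ∀ {s j}, 0 < P s j → R.col s = halfCol j :=
    col_eq_halfCol_of_mul_eq hR0 hR1 hR hP0 hRP
  have hPrank : P.rank = 4 := by
    refine P.rank_eq_card_of_pivots t (fun j => (ht j).ne') fun j j' hjj' => ?_
    by_contra hne
    exact hjj' (halfCol_injective ((hcol (ht j)).symm.trans
      (hcol ((hP0 _ _).lt_of_ne' hne))))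
  exact ⟨fun j => ⟨t j, hcol (ht j)⟩, hPrank, by omega⟩
end

section
/- The 6×6 extended boxworld matrix C_EBW with rows (0,0,0,0,1,1),(1,0,0,1,0,0),(0,1,1,0,0,0),(0,0,0,0,1,1),(1,0,1,0,0,0),(0,1,0,1,0,0) has rank 4, and the factorization C_EBW = W·H with W the 6×5 matrix with rows (0,0,0,0,1),(1,0,0,1,0),(0,1,1,0,0),(0,0,0,0,1),(1,0,1,0,0),(0,1,0,1,0) and H the 5×6 matrix whose first four rows are the first four standard basis row vectors of ℝ^6 and whose fifth row is (0,0,0,0,1,1), is an exact nonnegative factorization with rank(W) = 4 and rank(H) = 5; in particular rank(H) > rank(C_EBW). -/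
/-!
Rows 0, 1, 2, 4 and columns 0, 1, 2, 4 of `C_EBW` form an invertible `4 × 4` minor, so
`4 ≤ rank C_EBW ≤ rank W`. The rows of `W` satisfy `r₀ = r₃` and `r₁ + r₂ = r₄ + r₅`: a rank-two
matrix annihilates `W` from the left, so `rank W ≤ 6 - 2`. Finally `H` contains the `5 × 5`
identity as its first five columns.
-/

open Matrix

theorem Matrix.card_le_rank_of_det_submatrix_ne_zero {R m n ι : Type*} [CommRing R] [IsDomain R]
    [Fintype n] [Fintype ι] [DecidableEq ι] (A : Matrix m n R) (r : ι → m) (c : ι → n)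
    (h : (A.submatrix r c).det ≠ 0) : Fintype.card ι ≤ A.rank :=
  rank_of_det_ne_zero h ▸ A.rank_submatrix_le r c

def extendedBoxworld : Matrix (Fin 6) (Fin 6) ℝ :=
  !![0,0,0,0,1,1; 1,0,0,1,0,0; 0,1,1,0,0,0; 0,0,0,0,1,1; 1,0,1,0,0,0; 0,1,0,1,0,0]

def extendedBoxworldW : Matrix (Fin 6) (Fin 5) ℝ :=
  !![0,0,0,0,1; 1,0,0,1,0; 0,1,1,0,0; 0,0,0,0,1; 1,0,1,0,0; 0,1,0,1,0]

def extendedBoxworldH : Matrix (Fin 5) (Fin 6) ℝ :=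
  !![1,0,0,0,0,0; 0,1,0,0,0,0; 0,0,1,0,0,0; 0,0,0,1,0,0; 0,0,0,0,1,1]

def extendedBoxworldWAnnihilator : Matrix (Fin 2) (Fin 6) ℝ :=
  !![1,0,0,-1,0,0; 0,1,1,0,-1,-1]

theorem extendedBoxworld_eq_mul : extendedBoxworld = extendedBoxworldW * extendedBoxworldH := by
  ext i j
  fin_cases i <;> fin_cases j <;>
    simp [extendedBoxworld, extendedBoxworldW, extendedBoxworldH, mul_apply, Fin.sum_univ_succ]

theorem extendedBoxworldW_nonneg (i : Fin 6) (j : Fin 5) : 0 ≤ extendedBoxworldW i j := by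
  fin_cases i <;> fin_cases j <;> simp [extendedBoxworldW]

theorem extendedBoxworldH_nonneg (i : Fin 5) (j : Fin 6) : 0 ≤ extendedBoxworldH i j := by
  fin_cases i <;> fin_cases j <;> simp [extendedBoxworldH]

theorem extendedBoxworldWAnnihilator_mul : extendedBoxworldWAnnihilator * extendedBoxworldW = 0 := by
  ext i j
  fin_cases i <;> fin_cases j <;>
    simp [extendedBoxworldWAnnihilator, extendedBoxworldW, mul_apply, Fin.sum_univ_succ]

theorem extendedBoxworldWAnnihilator_rank : extendedBoxworldWAnnihilator.rank = 2 := by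
  refine le_antisymm (by simpa using extendedBoxworldWAnnihilator.rank_le_card_height) ?_
  simpa using extendedBoxworldWAnnihilator.card_le_rank_of_det_submatrix_ne_zero id ![0, 1]
    (by simp [extendedBoxworldWAnnihilator, det_fin_two])

theorem four_le_extendedBoxworld_rank : 4 ≤ extendedBoxworld.rank := by
  simpa using extendedBoxworld.card_le_rank_of_det_submatrix_ne_zero ![0, 1, 2, 4] ![0, 1, 2, 4]
    (by simp [extendedBoxworld, det_succ_row_zero, Fin.sum_univ_succ, submatrix, Fin.succAbove])

theorem extendedBoxworldW_rank_le : extendedBoxworldW.rank ≤ 4 := by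
  have := rank_add_rank_le_card_of_mul_eq_zero extendedBoxworldWAnnihilator_mul
  rw [extendedBoxworldWAnnihilator_rank, Fintype.card_fin] at this
  omega

theorem extendedBoxworld_rank : extendedBoxworld.rank = 4 :=
  le_antisymm
    (extendedBoxworld_eq_mul ▸ (rank_mul_le_left _ _).trans extendedBoxworldW_rank_le)
    four_le_extendedBoxworld_rank

theorem extendedBoxworldW_rank : extendedBoxworldW.rank = 4 :=
  le_antisymm extendedBoxworldW_rank_le <| extendedBoxworld_rank ▸ extendedBoxworld_eq_mul ▸
    rank_mul_le_left _ _

theorem extendedBoxworldH_rank : extendedBoxworldH.rank = 5 := by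
  refine le_antisymm (by simpa using extendedBoxworldH.rank_le_card_height) ?_
  simpa using extendedBoxworldH.card_le_rank_of_det_submatrix_ne_zero id Fin.castSucc
    (by simp [extendedBoxworldH, det_succ_row_zero, Fin.sum_univ_succ, submatrix,
      Fin.succAbove])

/-- The extended boxworld matrix has rank 4 and admits the exhibited exact
nonnegative factorization `C_EBW = W * H` with `rank W = 4` and `rank H = 5`;
in particular the equirank condition fails: `rank H > rank C_EBW`. -/
theorem extended_boxworld_contextual_model
    (C : Matrix (Fin 6) (Fin 6) ℝ)
    (hC : C = !![0,0,0,0,1,1;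
                 1,0,0,1,0,0;
                 0,1,1,0,0,0;
                 0,0,0,0,1,1;
                 1,0,1,0,0,0;
                 0,1,0,1,0,0])
    (W : Matrix (Fin 6) (Fin 5) ℝ)
    (hW : W = !![0,0,0,0,1;
                 1,0,0,1,0;
                 0,1,1,0,0;
                 0,0,0,0,1;
                 1,0,1,0,0;
                 0,1,0,1,0])
    (H : Matrix (Fin 5) (Fin 6) ℝ)
    (hH : H = !![1,0,0,0,0,0;
                 0,1,0,0,0,0;
                 0,0,1,0,0,0;
                 0,0,0,1,0,0;
                 0,0,0,0,1,1]) :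
    C.rank = 4 ∧ C = W * H ∧
    (∀ i j, 0 ≤ W i j) ∧ (∀ i j, 0 ≤ H i j) ∧
    W.rank = 4 ∧ H.rank = 5 ∧ C.rank < H.rank := by
  obtain rfl : C = extendedBoxworld := hC
  obtain rfl : W = extendedBoxworldW := hW
  obtain rfl : H = extendedBoxworldH := hH
  refine ⟨extendedBoxworld_rank, extendedBoxworld_eq_mul, extendedBoxworldW_nonneg,
    extendedBoxworldH_nonneg, extendedBoxworldW_rank, extendedBoxworldH_rank, ?_⟩
  rw [extendedBoxworld_rank, extendedBoxworldH_rank]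
  norm_num
end
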